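/- arXiv:cond-mat/0605336 — 2 statements merged into one kernel-verified Lean document; each statement's English description precedes it below -/
import Mathlib

section
/- Let G=(V,E) be a finite simple graph, and define H(σ) = Σ_{(i,j)} J_{ij}σ_iσ_j - h Σ_i σ_i on configurations σ ∈ {0,1}^V, with J_{ij}=1 if (i,j)∉E and i≠j, J_{ij}=0 otherwise, and 0<h<1. If the support of σ is not a clique of G, then there exists a vertex i ∈ supp(σ) such that H(σ) > H(σ \ {i}), where σ \ {i} is σ with σ_i set to 0. -/
/-!
The coupling matrix `J` is the adjacency matrix of the complement graph `Gᶜ`, so `H` is half its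
quadratic form minus `h Σ σ`. Removing a vertex `i` from the support changes the energy by
`Σ_j J_{ij} σ_j - h`, the number of support vertices not adjacent to `i` minus `h`. If the support
is not a clique, some `i` in it has a non-neighbour `j` in it, so this change is at least
`1 - h > 0`.
-/

open Matrix Function

theorem Function.update_zero_add_single {n R : Type*} [DecidableEq n] [AddZeroClass R]
    (σ : n → R) (i : n) : update σ i 0 + Pi.single i (σ i) = σ := by
  ext a
  rcases eq_or_ne a i with rfl | ha <;> simp [*]

theorem Fintype.sum_eq_sum_update_zero_add {n R : Type*} [Fintype n] [DecidableEq n]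
    [AddCommMonoid R] (σ : n → R) (i : n) : ∑ a, σ a = ∑ a, update σ i 0 a + σ i := by
  conv_lhs => rw [← update_zero_add_single σ i]
  rw [Pi.add_def, Finset.sum_add_distrib, Fintype.sum_pi_single']

theorem Matrix.IsSymm.dotProduct_mulVec_update_zero {n R : Type*} [Fintype n] [DecidableEq n]
    [CommRing R] {J : Matrix n n R} (hJ : J.IsSymm) (hdiag : ∀ a, J a a = 0) (σ : n → R)
    (i : n) : σ ⬝ᵥ J *ᵥ σ = update σ i 0 ⬝ᵥ J *ᵥ update σ i 0 + 2 * σ i * (J *ᵥ σ) i := by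
  set τ := update σ i 0
  set s : n → R := Pi.single i (σ i)
  have hσ : σ = τ + s := (update_zero_add_single σ i).symm
  have hs : ∀ a, (J *ᵥ s) a = J a i * σ i := by simp [s, mulVec_single]
  have hτs : τ ⬝ᵥ J *ᵥ s = σ i * (J *ᵥ τ) i := by
    rw [dotProduct_mulVec, dotProduct_single, ← vecMul_transpose, hJ.eq, mul_comm]
  have hJσ : (J *ᵥ σ) i = (J *ᵥ τ) i := by
    rw [hσ, mulVec_add, Pi.add_apply, hs, hdiag, zero_mul, add_zero]
  rw [hJσ]
  conv_lhs => rw [hσ]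
  rw [mulVec_add, dotProduct_add, add_dotProduct, add_dotProduct, hτs, single_dotProduct,
    single_dotProduct, hs, hdiag, zero_mul, mul_zero]
  ring

namespace SimpleGraph

variable {V R : Type*} [Fintype V] (G : SimpleGraph V) [DecidableRel G.Adj]

theorem dotProduct_adjMatrix_mulVec_update_zero [DecidableEq V] [CommRing R] (σ : V → R)
    (i : V) : σ ⬝ᵥ G.adjMatrix R *ᵥ σ =
      update σ i 0 ⬝ᵥ G.adjMatrix R *ᵥ update σ i 0 + 2 * σ i * (G.adjMatrix R *ᵥ σ) i :=
  G.isSymm_adjMatrix.dotProduct_mulVec_update_zero (fun _ => by simp) σ i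

theorem le_adjMatrix_mulVec_apply [Semiring R] [PartialOrder R] [IsOrderedAddMonoid R]
    {σ : V → R} (hσ : 0 ≤ σ) {i j : V} (hij : G.Adj i j) : σ j ≤ (G.adjMatrix R *ᵥ σ) i := by
  rw [adjMatrix_mulVec_apply]
  exact Finset.single_le_sum (fun b _ => hσ b) ((G.mem_neighborFinset i j).2 hij)

theorem sum_sum_ite_compl_adj_mul [DecidableEq V] [CommSemiring R] (τ : V → R) :
    ∑ a, ∑ b, (if a ≠ b ∧ ¬ G.Adj a b then (1 : R) else 0) * τ a * τ b =
      τ ⬝ᵥ Gᶜ.adjMatrix R *ᵥ τ := by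
  simp only [dotProduct, mulVec, Finset.mul_sum, adjMatrix_apply, compl_adj]
  refine Fintype.sum_congr _ _ fun a => Fintype.sum_congr _ _ fun b => ?_
  split_ifs <;> ring

end SimpleGraph

theorem stmt_1_general {V : Type*} [Fintype V] [DecidableEq V]
    (G : SimpleGraph V) [DecidableRel G.Adj]
    (h : ℝ) (hh1 : h < 1)
    (σ : V → ℝ) (hσ : ∀ i, σ i = 0 ∨ σ i = 1)
    (hnot : ¬ G.IsClique {i | σ i = 1}) :
    let H : (V → ℝ) → ℝ := fun τ =>
      (∑ a, ∑ b, (if a ≠ b ∧ ¬ G.Adj a b then (1:ℝ) else 0) * τ a * τ b) / 2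
        - h * ∑ a, τ a
    ∃ i, σ i = 1 ∧ H (Function.update σ i 0) < H σ := by
  intro H
  obtain ⟨i, hi : σ i = 1, j, hj : σ j = 1, hij, hadj⟩ :
      ∃ i, σ i = 1 ∧ ∃ j, σ j = 1 ∧ i ≠ j ∧ ¬ G.Adj i j := by
    simpa [SimpleGraph.isClique_iff, Set.Pairwise] using hnot
  have hσ_nonneg : 0 ≤ σ := fun a => by rcases hσ a with ha | ha <;> simp [ha]
  have hdrop : H σ - H (update σ i 0) = (Gᶜ.adjMatrix ℝ *ᵥ σ) i - h := by
    simp only [H, G.sum_sum_ite_compl_adj_mul]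
    rw [Gᶜ.dotProduct_adjMatrix_mulVec_update_zero σ i,
      Fintype.sum_eq_sum_update_zero_add σ i, hi]
    ring
  have hnonadj : 1 ≤ (Gᶜ.adjMatrix ℝ *ᵥ σ) i :=
    hj ▸ Gᶜ.le_adjMatrix_mulVec_apply hσ_nonneg ((G.compl_adj i j).2 ⟨hij, hadj⟩)
  exact ⟨i, hi, by linarith⟩

/-- If the support of a 0/1 configuration `σ` is not a clique of `G`, then there is a vertex
`i` in the support such that removing it strictly decreases the Hamiltonian
`H(σ) = Σ_{(i,j)} J_{ij} σ_i σ_j - h Σ_i σ_i`, with `J_{ij} = 1` iff `i ≠ j` and `(i,j) ∉ E`,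
and `0 < h < 1`. -/
theorem stmt_1 {V : Type*} [Fintype V] [DecidableEq V]
    (G : SimpleGraph V) [DecidableRel G.Adj]
    (h : ℝ) (hh0 : 0 < h) (hh1 : h < 1)
    (σ : V → ℝ) (hσ : ∀ i, σ i = 0 ∨ σ i = 1)
    (hnot : ¬ G.IsClique {i | σ i = 1}) :
    let H : (V → ℝ) → ℝ := fun τ =>
      (∑ a, ∑ b, (if a ≠ b ∧ ¬ G.Adj a b then (1:ℝ) else 0) * τ a * τ b) / 2
        - h * ∑ a, τ a
    ∃ i, σ i = 1 ∧ H (Function.update σ i 0) < H σ :=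
  stmt_1_general G h hh1 σ hσ hnot
end

section
/- Let G=(V,E) be a finite simple graph and 0<h<1. The Hamiltonian H(σ) = Σ_{(i,j)} J_{ij}σ_iσ_j - h Σ_i σ_i, with J_{ij}=1 iff i≠j and (i,j)∉E, attains its minimum over all configurations σ ∈ {0,1}^V exactly on configurations whose support is a maximum clique of G. -/
/-!
On a 0/1 configuration with support `T` the Hamiltonian is (number of non-edges inside `T`)
minus `h * #T`. Deleting an endpoint of a non-edge removes at least one non-edge but costs only
`h < 1`, so it strictly lowers the energy. Hence every minimizer is a clique, every support
contains a clique of no larger energy, and on cliques the energy `-h * #T` is smallest exactly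
at maximum size.
-/

open Finset

namespace SimpleGraph

variable {V : Type*} [DecidableEq V] (G : SimpleGraph V) [DecidableRel G.Adj]

/-- Counts ordered pairs, so it is twice the number of non-edges of `G` inside `T`. -/
def nonAdjCount (T : Finset V) : ℕ :=
  ∑ a ∈ T, #{b ∈ T | Gᶜ.Adj a b}

variable {G}

lemma nonAdjCount_eq_zero {T : Finset V} (hT : G.IsClique (T : Set V)) :
    G.nonAdjCount T = 0 := by
  refine sum_eq_zero fun a ha => card_eq_zero.2 <| filter_eq_empty_iff.2 fun b hb hab => ?_
  obtain ⟨hne, hnadj⟩ := (G.compl_adj a b).1 hab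
  exact hnadj (hT ha hb hne)

lemma nonAdjCount_erase_add_two_le {T : Finset V} {a b : V} (ha : a ∈ T) (hb : b ∈ T)
    (hab : Gᶜ.Adj a b) : G.nonAdjCount (T.erase a) + 2 ≤ G.nonAdjCount T := by
  have hb' : b ∈ T.erase a := mem_erase.2 ⟨hab.ne.symm, hb⟩
  have h_a : 1 ≤ #{c ∈ T | Gᶜ.Adj a c} := card_pos.2 ⟨b, mem_filter.2 ⟨hb, hab⟩⟩
  -- erasing `a` loses the pair `(b, a)` from the row of `b`
  have h_rows : G.nonAdjCount (T.erase a) < ∑ x ∈ T.erase a, #{c ∈ T | Gᶜ.Adj x c} := by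
    refine sum_lt_sum (fun x _ => card_le_card (filter_subset_filter _ (erase_subset a T)))
      ⟨b, hb', card_lt_card ⟨filter_subset_filter _ (erase_subset a T), fun hsub => ?_⟩⟩
    simpa using hsub (mem_filter.2 ⟨ha, hab.symm⟩)
  have h_split : #{c ∈ T | Gᶜ.Adj a c} + ∑ x ∈ T.erase a, #{c ∈ T | Gᶜ.Adj x c} =
      G.nonAdjCount T := add_sum_erase T (fun x => #{c ∈ T | Gᶜ.Adj x c}) ha
  omega

variable (G)

noncomputable def energy (h : ℝ) (T : Finset V) : ℝ :=
  (G.nonAdjCount T : ℝ) / 2 - h * #T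

variable {G} {h : ℝ}

lemma energy_of_isClique {T : Finset V} (hT : G.IsClique (T : Set V)) :
    G.energy h T = -(h * #T) := by
  simp [energy, nonAdjCount_eq_zero hT]

lemma exists_energy_erase_lt (hh1 : h < 1) {T : Finset V} (hT : ¬ G.IsClique (T : Set V)) :
    ∃ a ∈ T, G.energy h (T.erase a) < G.energy h T := by
  obtain ⟨a, ha, b, hb, hne, hadj⟩ : ∃ a ∈ T, ∃ b ∈ T, a ≠ b ∧ ¬ G.Adj a b := by
    simpa [IsClique, Set.Pairwise] using hT
  refine ⟨a, ha, ?_⟩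
  have hcount : (G.nonAdjCount (T.erase a) : ℝ) + 2 ≤ G.nonAdjCount T := by
    exact_mod_cast nonAdjCount_erase_add_two_le ha hb ((G.compl_adj a b).2 ⟨hne, hadj⟩)
  rw [energy, energy, cast_card_erase_of_mem ha]
  linarith

lemma exists_isClique_subset_energy_le (hh1 : h < 1) (T : Finset V) :
    ∃ S ⊆ T, G.IsClique (S : Set V) ∧ G.energy h S ≤ G.energy h T := by
  induction T using strongInduction with
  | H T ih =>
    by_cases hT : G.IsClique (T : Set V)
    · exact ⟨T, subset_rfl, hT, le_rfl⟩
    · obtain ⟨a, ha, hlt⟩ := exists_energy_erase_lt hh1 hT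
      obtain ⟨S, hST, hS, hle⟩ := ih _ (erase_ssubset ha)
      exact ⟨S, hST.trans (erase_subset a T), hS, hle.trans hlt.le⟩

theorem forall_energy_le_iff_isMaximumClique [Finite V] (hh0 : 0 < h) (hh1 : h < 1)
    (S : Finset V) : (∀ T, G.energy h S ≤ G.energy h T) ↔ G.IsMaximumClique S := by
  rw [isMaximumClique_iff]
  constructor
  · intro hmin
    have hS : G.IsClique (S : Set V) := by
      by_contra hS
      obtain ⟨a, -, hlt⟩ := exists_energy_erase_lt hh1 hS
      exact (hmin _).not_gt hlt
    refine ⟨hS, fun T hT => ?_⟩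
    have := hmin T
    rw [energy_of_isClique hS, energy_of_isClique hT] at this
    exact_mod_cast le_of_mul_le_mul_left (neg_le_neg_iff.1 this) hh0
  · rintro ⟨hS, hmax⟩ T
    obtain ⟨U, -, hU, hle⟩ := exists_isClique_subset_energy_le (G := G) hh1 T
    refine le_trans ?_ hle
    rw [energy_of_isClique hS, energy_of_isClique hU, neg_le_neg_iff]
    exact mul_le_mul_of_nonneg_left (by exact_mod_cast hmax U hU) hh0.le

variable [Fintype V] (G) (h)

noncomputable def hamiltonian (τ : V → ℝ) : ℝ :=
  (∑ a, ∑ b, (if a ≠ b ∧ ¬ G.Adj a b then (1:ℝ) else 0) * τ a * τ b) / 2 - h * ∑ a, τ a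

variable {G} {h}

lemma hamiltonian_indicator (T : Finset V) :
    G.hamiltonian h (fun i => if i ∈ T then 1 else 0) = G.energy h T := by
  simp only [hamiltonian, energy, nonAdjCount, mul_ite, mul_one, mul_zero, sum_ite_mem, univ_inter,
    sum_ite_irrel, sum_const_zero, sum_boole, compl_adj, Nat.cast_sum, sum_const, nsmul_eq_mul]

lemma hamiltonian_eq_energy {τ : V → ℝ} (hτ : ∀ i, τ i = 0 ∨ τ i = 1) :
    G.hamiltonian h τ = G.energy h {i | τ i = 1} := by
  rw [← hamiltonian_indicator]
  congr 1
  funext i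
  rcases hτ i with hi | hi <;> simp [hi]

end SimpleGraph

open SimpleGraph in
/-- For `0 < h < 1`, the Hamiltonian `H(σ) = Σ_{(i,j)} J_{ij} σ_i σ_j - h Σ_i σ_i`
(with `J_{ij} = 1` iff `i ≠ j` and `(i,j) ∉ E`) attains its minimum over all 0/1
configurations exactly on configurations whose support is a maximum clique of `G`. -/
theorem stmt_2 {V : Type*} [Fintype V] [DecidableEq V]
    (G : SimpleGraph V) [DecidableRel G.Adj]
    (h : ℝ) (hh0 : 0 < h) (hh1 : h < 1)
    (σ : V → ℝ) (hσ : ∀ i, σ i = 0 ∨ σ i = 1) :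
    let H : (V → ℝ) → ℝ := fun τ =>
      (∑ a, ∑ b, (if a ≠ b ∧ ¬ G.Adj a b then (1:ℝ) else 0) * τ a * τ b) / 2
        - h * ∑ a, τ a
    ((∀ τ : V → ℝ, (∀ i, τ i = 0 ∨ τ i = 1) → H σ ≤ H τ) ↔
      (G.IsClique {i | σ i = 1} ∧
        ∀ S : Finset V, G.IsClique (S : Set V) → S.card ≤ {i | σ i = 1}.ncard)) := by
  intro H
  change (∀ τ : V → ℝ, _ → G.hamiltonian h σ ≤ G.hamiltonian h τ) ↔ _
  have hsupp : {i | σ i = 1} = (({i | σ i = 1} : Finset V) : Set V) := by simp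
  rw [hsupp, Set.ncard_coe_finset, ← isMaximumClique_iff,
    ← forall_energy_le_iff_isMaximumClique (G := G) hh0 hh1, hamiltonian_eq_energy hσ]
  constructor
  · intro hmin T
    rw [← hamiltonian_indicator T]
    exact hmin _ fun i => (ite_eq_or_eq (i ∈ T) _ _).symm
  · intro hmin τ hτ
    rw [hamiltonian_eq_energy hτ]
    exact hmin _
end
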